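/- Every precosheaf F on a T0 Alexandroff space X admits a cosheafification: there is a cosheaf F⁺, defined by F⁺(U) = colim over x ∈ U of F(U_x), together with a homomorphism π : F⁺ → F (induced by inclusions U_x ⊆ U), such that for every homomorphism α : G → F from a cosheaf G, there exists a unique homomorphism α̃ : G → F⁺ with π ∘ α̃ = α. -/

import Mathlib

/-!
A cocone over the nerve of a cover of `U` can be evaluated on the generator `F(U_x) → F⁺(V)`
for any member `V ∋ x` of the nerve, and the result does not depend on `V` because `V ∩ V'` is
again in the nerve; these values form a cocone on the point diagram of `U`, which makes `F⁺` a
cosheaf.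

For a cosheaf `G`, the cover of `U` by the minimal open sets `U_x`, `x ∈ U`, shows that `G(U)` is
generated by the `G(U_x)` and is in fact their colimit, so `π : G⁺ → G` is an isomorphism and
`α : G → F` lifts as `π⁻¹ ≫ α⁺`. The lift is unique since `π : F⁺(U_x) → F(U_x)` is an
isomorphism (`x` is the top point of `U_x`) and maps out of a cosheaf are determined on the `U_x`.
-/
open CategoryTheory CategoryTheory.Limits TopologicalSpace


/-- The minimal open set containing `x`. -/
def minOpen {X : Type} [TopologicalSpace X] (x : X) : Set X :=
  ⋂₀ {U : Set X | IsOpen U ∧ x ∈ U}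

lemma isOpen_minOpen {X : Type} [TopologicalSpace X] [AlexandrovDiscrete X] (x : X) :
    IsOpen (minOpen x) :=
  isOpen_sInter fun _ h => h.1

/-- The minimal open set containing `x`, as an element of `Opens X`. -/
def Uo {X : Type} [TopologicalSpace X] [AlexandrovDiscrete X] (x : X) : Opens X :=
  ⟨minOpen x, isOpen_minOpen x⟩

lemma minOpen_le {X : Type} [TopologicalSpace X] {x : X} {U : Opens X} (hx : x ∈ U) :
    minOpen x ⊆ (U : Set X) :=
  Set.sInter_subset_of_mem ⟨U.isOpen, hx⟩

/-- A precosheaf of abelian groups on `X`: a covariant functor on open sets. -/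
abbrev Precosheaf (X : Type) [TopologicalSpace X] := Opens X ⥤ AddCommGrpCat.{0}

variable {X : Type} [TopologicalSpace X]

/-- The nerve of an open cover: the nonempty finite intersections of its members. -/
def nerveSet (𝒰 : Set (Opens X)) : Set (Opens X) :=
  {V | (V : Set X).Nonempty ∧ ∃ s : Finset (Opens X), ↑s ⊆ 𝒰 ∧ s.Nonempty ∧ V = s.inf id}

lemma nerve_le {𝒰 : Set (Opens X)} {U : Opens X} (h : ∀ V ∈ 𝒰, V ≤ U)
    {V : Opens X} (hV : V ∈ nerveSet 𝒰) : V ≤ U := by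
  obtain ⟨-, s, hs, ⟨w, hw⟩, rfl⟩ := hV
  exact le_trans (Finset.inf_le hw) (h w (hs hw))

/-- The diagram of a precosheaf over the nerve of an open cover. -/
def nerveDiagram (F : Precosheaf X) (𝒰 : Set (Opens X)) :
    ObjectProperty.FullSubcategory (· ∈ nerveSet 𝒰) ⥤ AddCommGrpCat.{0} :=
  ObjectProperty.ι (· ∈ nerveSet 𝒰) ⋙ F

/-- The canonical cocone on the nerve diagram with apex `F(U)`. -/
def coverCocone (F : Precosheaf X) (U : Opens X) (𝒰 : Set (Opens X))
    (h : ∀ V ∈ 𝒰, V ≤ U) : Cocone (nerveDiagram F 𝒰) where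
  pt := F.obj U
  ι :=
    { app := fun V => F.map (homOfLE (nerve_le h V.2))
      naturality := fun a b f => by
        dsimp [nerveDiagram]
        rw [Category.comp_id, ← F.map_comp]
        rfl }

/-- A precosheaf is a cosheaf if for every open `U` and every open cover `𝒰` of `U`, the
canonical map from the colimit over the nerve of `𝒰` to `F(U)` is an isomorphism, i.e.
`F(U)` is the colimit of the nerve diagram. -/
def IsCosheaf (F : Precosheaf X) : Prop :=
  ∀ (U : Opens X) (𝒰 : Set (Opens X)) (h𝒰 : ∀ V ∈ 𝒰, V ≤ U), U ≤ sSup 𝒰 →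
    Nonempty (IsColimit (coverCocone F U 𝒰 h𝒰))

/-- The Alexandroff space `X(P)` of a poset `P`: open sets are the up-sets. -/
def upTop (P : Type) [Preorder P] : TopologicalSpace P where
  IsOpen := IsUpperSet
  isOpen_univ := isUpperSet_univ
  isOpen_inter _ _ := IsUpperSet.inter
  isOpen_sUnion _ h := isUpperSet_sUnion h

variable {P : Type} [PartialOrder P]

/-- The diagram of a cellular cosheaf `F : P ⥤ Ab` over the subposet `U ⊆ P`. -/
def openDiagram (F : P ⥤ AddCommGrpCat.{0}) (U : Set P) :
    ObjectProperty.FullSubcategory (· ∈ U) ⥤ AddCommGrpCat.{0} :=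
  ObjectProperty.ι (· ∈ U) ⋙ F

noncomputable def hatMap (F : P ⥤ AddCommGrpCat.{0}) {U V : Set P} (h : U ⊆ V) :
    colimit (openDiagram F U) ⟶ colimit (openDiagram F V) :=
  colimit.pre (openDiagram F V) (ObjectProperty.ιOfLE fun _ hx => h hx)

lemma hatMap_ι (F : P ⥤ AddCommGrpCat.{0}) {U V : Set P} (h : U ⊆ V)
    (j : ObjectProperty.FullSubcategory (· ∈ U)) :
    colimit.ι (openDiagram F U) j ≫ hatMap F h =
      colimit.ι (openDiagram F V) ⟨j.1, h j.2⟩ := by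
  exact colimit.ι_pre (openDiagram F V) (ObjectProperty.ιOfLE fun _ hx => h hx) j

/-- The cosheaf `F̂` on `X(P)` associated to a cellular cosheaf `F : P ⥤ Ab`,
with `F̂(U) = colim_{x ∈ U} F(x)`. -/
noncomputable def hatF (F : P ⥤ AddCommGrpCat.{0}) :
    @TopologicalSpace.Opens P (upTop P) ⥤ AddCommGrpCat.{0} where
  obj U := colimit (openDiagram F (U : Set P))
  map {U V} h := hatMap F h.le
  map_id U := by
    apply colimit.hom_ext
    intro j
    erw [hatMap_ι]
    simp
  map_comp {U V W} f g := by
    apply colimit.hom_ext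
    intro j
    exact ((hatMap_ι F _ j).trans ((hatMap_ι F g.le ⟨j.1, f.le j.2⟩).symm.trans
      (congrArg (· ≫ hatMap F g.le) (hatMap_ι F f.le j).symm))).trans (Category.assoc _ _ _)
section PtDiagram
variable {X : Type} [TopologicalSpace X]

/-- The points of `U`, preordered by `x ≤ y` iff `U_x ⊆ U_y`. -/
def PtCat (U : Set X) : Type := {x : X // x ∈ U}

instance (U : Set X) : Preorder (PtCat U) where
  le a b := minOpen a.1 ⊆ minOpen b.1
  le_refl _ := subset_rfl
  le_trans _ _ _ h1 h2 := Set.Subset.trans h1 h2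

variable [AlexandrovDiscrete X]

/-- The diagram `x ∈ U ↦ G(U_x)` over the poset `U` (with `x ≤ y` iff `U_x ⊆ U_y`). -/
def ptDiagram (G : Precosheaf X) (U : Set X) : PtCat U ⥤ AddCommGrpCat.{0} where
  obj x := G.obj (Uo x.1)
  map {a b} f := G.map (homOfLE (SetLike.coe_subset_coe.mp f.le))
  map_id a := G.map_id _
  map_comp f g := G.map_comp _ _

/-- The canonical cocone on `ptDiagram G U` with apex `G(U)`, given by the inclusions
`U_x ⊆ U`. -/
def ptCocone (G : Precosheaf X) (U : Opens X) : Cocone (ptDiagram G (U : Set X)) where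
  pt := G.obj U
  ι :=
    { app := fun x => G.map (homOfLE (minOpen_le x.2))
      naturality := fun a b f => by
        dsimp [ptDiagram]
        rw [Category.comp_id, ← G.map_comp]
        rfl }

end PtDiagram

section Plus
variable {X : Type} [TopologicalSpace X] [AlexandrovDiscrete X]

/-- The inclusion of posets of points induced by `U ⊆ V`. -/
def ptIncl {U V : Set X} (h : U ⊆ V) : PtCat U ⥤ PtCat V :=
  Monotone.functor (f := fun a => (⟨a.1, h a.2⟩ : PtCat V)) fun _ _ hab => hab

noncomputable def plusMap (F : Precosheaf X) {U V : Set X} (h : U ⊆ V) :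
    colimit (ptDiagram F U) ⟶ colimit (ptDiagram F V) :=
  colimit.pre (ptDiagram F V) (ptIncl h)

lemma plusMap_ι (F : Precosheaf X) {U V : Set X} (h : U ⊆ V) (j : PtCat U) :
    colimit.ι (ptDiagram F U) j ≫ plusMap F h =
      colimit.ι (ptDiagram F V) ⟨j.1, h j.2⟩ :=
  colimit.ι_pre (ptDiagram F V) (ptIncl h) j

/-- The cosheafification `F⁺` of a precosheaf `F` on a `T0` Alexandroff space:
`F⁺(U) = colim_{x ∈ U} F(U_x)`. -/
noncomputable def plus (F : Precosheaf X) : Precosheaf X where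
  obj U := colimit (ptDiagram F (U : Set X))
  map {U V} h := plusMap F h.le
  map_id U := by
    apply colimit.hom_ext
    intro j
    erw [plusMap_ι, Category.comp_id]
    rfl
  map_comp {U V W} f g := by
    apply colimit.hom_ext
    intro j
    exact ((plusMap_ι F _ j).trans ((plusMap_ι F g.le ⟨j.1, f.le j.2⟩).symm.trans
      (congrArg (· ≫ plusMap F g.le) (plusMap_ι F f.le j).symm))).trans (Category.assoc _ _ _)

lemma plus_map (F : Precosheaf X) {U V : Opens X} (h : U ⟶ V) :
    (plus F).map h = plusMap F h.le := rfl

/-- The canonical homomorphism `π : F⁺ → F`, induced by the inclusions `U_x ⊆ U`. -/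
noncomputable def plusπ (F : Precosheaf X) : plus F ⟶ F where
  app U := colimit.desc (ptDiagram F (U : Set X)) (ptCocone F U)
  naturality {U V} h := by
    apply colimit.hom_ext
    intro j
    rw [plus_map]
    refine (Category.assoc _ _ _).symm.trans ?_
    refine (congrArg (· ≫ colimit.desc _ (ptCocone F V)) (plusMap_ι F h.le j)).trans ?_
    refine (colimit.ι_desc _ _).trans
      (Eq.trans ?_ (colimit.ι_desc_assoc (ptCocone F U) j (F.map h)).symm)
    exact Eq.trans (congrArg F.map (Subsingleton.elim _ _))
      (F.map_comp (homOfLE (minOpen_le j.2)) h)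

end Plus


section Nerve
variable {X : Type} [TopologicalSpace X]

lemma mem_nerveSet_of_mem {𝒰 : Set (Opens X)} {V : Opens X} (hV : V ∈ 𝒰) {x : X}
    (hx : x ∈ V) : V ∈ nerveSet 𝒰 :=
  ⟨⟨x, hx⟩, {V}, by simpa using hV, Finset.singleton_nonempty V, by simp⟩

lemma inf_mem_nerveSet {𝒰 : Set (Opens X)} {V V' : Opens X} (hV : V ∈ nerveSet 𝒰)
    (hV' : V' ∈ nerveSet 𝒰) {x : X} (hx : x ∈ V ⊓ V') : V ⊓ V' ∈ nerveSet 𝒰 := by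
  classical
  obtain ⟨-, s, hs, hsne, rfl⟩ := hV
  obtain ⟨-, s', hs', -, rfl⟩ := hV'
  refine ⟨⟨x, hx⟩, s ∪ s', ?_, hsne.mono Finset.subset_union_left, (Finset.inf_union).symm⟩
  rw [Finset.coe_union]
  exact Set.union_subset hs hs'

lemma exists_le_of_mem_nerveSet {𝒰 : Set (Opens X)} {V : Opens X} (hV : V ∈ nerveSet 𝒰) :
    ∃ W ∈ 𝒰, V ≤ W := by
  obtain ⟨-, s, hs, ⟨W, hW⟩, rfl⟩ := hV
  exact ⟨W, hs hW, Finset.inf_le hW⟩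

lemma exists_mem_nerveSet_of_le_sSup {𝒰 : Set (Opens X)} {U : Opens X} (hcov : U ≤ sSup 𝒰)
    {x : X} (hx : x ∈ U) : ∃ V ∈ nerveSet 𝒰, x ∈ V := by
  obtain ⟨V, hV, hxV⟩ := Opens.mem_sSup.mp (hcov hx)
  exact ⟨V, mem_nerveSet_of_mem hV hxV, hxV⟩

/-- Every member of the nerve lies in a member of the cover. -/
lemma IsCosheaf.hom_ext {G : Precosheaf X} (hG : IsCosheaf G) {U : Opens X}
    {𝒰 : Set (Opens X)} (h𝒰 : ∀ V ∈ 𝒰, V ≤ U) (hcov : U ≤ sSup 𝒰) {A : AddCommGrpCat.{0}}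
    {f g : G.obj U ⟶ A}
    (h : ∀ (V : Opens X) (hV : V ∈ 𝒰), G.map (homOfLE (h𝒰 V hV)) ≫ f =
      G.map (homOfLE (h𝒰 V hV)) ≫ g) :
    f = g := by
  obtain ⟨hc⟩ := hG U 𝒰 h𝒰 hcov
  refine hc.hom_ext fun ⟨V, hV⟩ => ?_
  obtain ⟨W, hW, hVW⟩ := exists_le_of_mem_nerveSet hV
  have hfac : G.map (homOfLE (nerve_le h𝒰 hV)) =
      G.map (homOfLE hVW) ≫ G.map (homOfLE (h𝒰 W hW)) := by
    rw [← G.map_comp]; rfl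
  change G.map (homOfLE (nerve_le h𝒰 hV)) ≫ f = G.map (homOfLE (nerve_le h𝒰 hV)) ≫ g
  rw [hfac, Category.assoc, Category.assoc, h W hW]

end Nerve

section MinOpen
variable {X : Type} [TopologicalSpace X] [AlexandrovDiscrete X]

lemma mem_Uo_self (x : X) : x ∈ Uo x :=
  Set.mem_sInter.mpr fun _ h => h.2

lemma Uo_le {x : X} {U : Opens X} (hx : x ∈ U) : Uo x ≤ U :=
  minOpen_le hx

def minOpenCover (U : Opens X) : Set (Opens X) :=
  Uo '' (U : Set X)

lemma le_of_mem_minOpenCover {U V : Opens X} (hV : V ∈ minOpenCover U) : V ≤ U := by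
  obtain ⟨x, hx, rfl⟩ := hV
  exact Uo_le hx

lemma le_sSup_minOpenCover (U : Opens X) : U ≤ sSup (minOpenCover U) :=
  fun x hx => Opens.mem_sSup.mpr ⟨Uo x, ⟨x, hx, rfl⟩, mem_Uo_self x⟩

lemma exists_le_Uo_of_mem_nerveSet {U V : Opens X} (hV : V ∈ nerveSet (minOpenCover U)) :
    ∃ x ∈ U, V ≤ Uo x := by
  obtain ⟨-, ⟨x, hx, rfl⟩, hVx⟩ := exists_le_of_mem_nerveSet hV
  exact ⟨x, hx, hVx⟩

lemma IsCosheaf.hom_ext_Uo {G : Precosheaf X} (hG : IsCosheaf G) {U : Opens X}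
    {A : AddCommGrpCat.{0}} {f g : G.obj U ⟶ A}
    (h : ∀ (x : X) (hx : x ∈ U), G.map (homOfLE (Uo_le hx)) ≫ f =
      G.map (homOfLE (Uo_le hx)) ≫ g) :
    f = g := by
  refine hG.hom_ext (fun _ => le_of_mem_minOpenCover) (le_sSup_minOpenCover U) ?_
  rintro V ⟨x, hx, rfl⟩
  exact h x hx

lemma ptDiagram_map_comp_ι_app {G : Precosheaf X} {U : Set X} (s : Cocone (ptDiagram G U))
    {z x : PtCat U} (h : Uo z.1 ≤ Uo x.1) :
    G.map (homOfLE h) ≫ s.ι.app x = s.ι.app z :=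
  s.w (homOfLE (SetLike.coe_subset_coe.mpr h))

lemma isIso_plusπ_app_of_isColimit {F : Precosheaf X} {U : Opens X}
    (h : IsColimit (ptCocone F U)) : IsIso ((plusπ F).app U) :=
  (colimit.isColimit _).nonempty_isColimit_iff_isIso_desc.mp ⟨h⟩

/-- `x` is the largest point of `U_x`, so the colimit defining `F⁺(U_x)` is just `F(U_x)`. -/
def isColimitPtCoconeUo (F : Precosheaf X) (x : X) : IsColimit (ptCocone F (Uo x)) :=
  colimitOfDiagramTerminal
    (IsTerminal.ofUniqueHom (C := PtCat (Uo x : Set X)) (Y := ⟨x, mem_Uo_self x⟩)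
      (fun y => homOfLE (minOpen_le y.2)) fun _ _ => Subsingleton.elim _ _) _

end MinOpen

section PlusIsCosheaf
variable {X : Type} [TopologicalSpace X] [AlexandrovDiscrete X]
  {F : Precosheaf X} {𝒰 : Set (Opens X)}

noncomputable def nerveLeg (s : Cocone (nerveDiagram (plus F) 𝒰)) {V : Opens X}
    (hV : V ∈ nerveSet 𝒰) {x : X} (hx : x ∈ V) : F.obj (Uo x) ⟶ s.pt :=
  colimit.ι (ptDiagram F (V : Set X)) (⟨x, hx⟩ : PtCat (V : Set X)) ≫ s.ι.app ⟨V, hV⟩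

lemma nerveLeg_eq_of_le (s : Cocone (nerveDiagram (plus F) 𝒰)) {W V : Opens X}
    (hW : W ∈ nerveSet 𝒰) (hV : V ∈ nerveSet 𝒰) (hWV : W ≤ V) {x : X} (hxW : x ∈ W)
    (hxV : x ∈ V) : nerveLeg s hW hxW = nerveLeg s hV hxV := by
  unfold nerveLeg
  rw [← s.w (ObjectProperty.homMk (homOfLE hWV) :
    (⟨W, hW⟩ : ObjectProperty.FullSubcategory (· ∈ nerveSet 𝒰)) ⟶ ⟨V, hV⟩)]
  exact (Category.assoc _ _ _).symm.trans
    (congrArg (· ≫ s.ι.app ⟨V, hV⟩) (plusMap_ι F (SetLike.coe_subset_coe.mpr hWV) ⟨x, hxW⟩))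

/-- The point `x` lies in `V ⊓ V'`, which is again in the nerve. -/
lemma nerveLeg_eq (s : Cocone (nerveDiagram (plus F) 𝒰)) {V V' : Opens X}
    (hV : V ∈ nerveSet 𝒰) (hV' : V' ∈ nerveSet 𝒰) {x : X} (hx : x ∈ V) (hx' : x ∈ V') :
    nerveLeg s hV hx = nerveLeg s hV' hx' := by
  have hW := inf_mem_nerveSet hV hV' ⟨hx, hx'⟩
  rw [← nerveLeg_eq_of_le s hW hV inf_le_left ⟨hx, hx'⟩,
    ← nerveLeg_eq_of_le s hW hV' inf_le_right ⟨hx, hx'⟩]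

lemma map_comp_nerveLeg (s : Cocone (nerveDiagram (plus F) 𝒰)) {V : Opens X}
    (hV : V ∈ nerveSet 𝒰) {y x : X} (hy : y ∈ V) (hx : x ∈ V) (hyx : Uo y ≤ Uo x) :
    F.map (homOfLE hyx) ≫ nerveLeg s hV hx = nerveLeg s hV hy :=
  (Category.assoc _ _ _).symm.trans (congrArg (· ≫ s.ι.app ⟨V, hV⟩)
    (ptDiagram_map_comp_ι_app (colimit.cocone _) (z := ⟨y, hy⟩) (x := ⟨x, hx⟩) hyx))

noncomputable def ptCoconeOfNerveCocone {U : Opens X} (hcov : U ≤ sSup 𝒰)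
    (s : Cocone (nerveDiagram (plus F) 𝒰)) : Cocone (ptDiagram F (U : Set X)) where
  pt := s.pt
  ι :=
    { app := fun x =>
        nerveLeg s (exists_mem_nerveSet_of_le_sSup hcov x.2).choose_spec.1
          (exists_mem_nerveSet_of_le_sSup hcov x.2).choose_spec.2
      naturality := fun y x hyx => by
        obtain ⟨hVx, hxV⟩ := (exists_mem_nerveSet_of_le_sSup hcov x.2).choose_spec
        have hyV := minOpen_le hxV (leOfHom hyx (mem_Uo_self y.1))
        refine ((map_comp_nerveLeg s hVx hyV hxV _).trans ?_).trans (Category.comp_id _).symm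
        exact nerveLeg_eq s _ _ _ _ }

lemma ι_desc_ptCoconeOfNerveCocone {U : Opens X} (hcov : U ≤ sSup 𝒰)
    (s : Cocone (nerveDiagram (plus F) 𝒰)) {V : Opens X} (hV : V ∈ nerveSet 𝒰) {x : X}
    (hxU : x ∈ U) (hxV : x ∈ V) :
    colimit.ι (ptDiagram F (U : Set X)) ⟨x, hxU⟩ ≫
      colimit.desc _ (ptCoconeOfNerveCocone hcov s) = nerveLeg s hV hxV :=
  (colimit.ι_desc _ _).trans (nerveLeg_eq s _ _ _ _)

noncomputable def isColimitCoverCoconePlus {U : Opens X} (h𝒰 : ∀ V ∈ 𝒰, V ≤ U)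
    (hcov : U ≤ sSup 𝒰) : IsColimit (coverCocone (plus F) U 𝒰 h𝒰) where
  desc s := colimit.desc _ (ptCoconeOfNerveCocone hcov s)
  fac s V := colimit.hom_ext (F := ptDiagram F (V.obj : Set X)) fun x =>
    ((Category.assoc _ _ _).symm.trans (congrArg (· ≫ _) (plusMap_ι F _ x))).trans
      (ι_desc_ptCoconeOfNerveCocone hcov s V.2 _ x.2)
  uniq s m hm := colimit.hom_ext (F := ptDiagram F (U : Set X)) fun x => by
    obtain ⟨hVx, hxV⟩ := (exists_mem_nerveSet_of_le_sSup hcov x.2).choose_spec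
    refine Eq.trans ?_ (ι_desc_ptCoconeOfNerveCocone hcov s hVx x.2 hxV).symm
    unfold nerveLeg
    rw [← hm]
    exact (congrArg (· ≫ m) (plusMap_ι F (SetLike.coe_subset_coe.mpr (nerve_le h𝒰 hVx))
      ⟨x.1, hxV⟩).symm).trans (Category.assoc _ _ _)

theorem isCosheaf_plus (F : Precosheaf X) : IsCosheaf (plus F) :=
  fun _ _ h𝒰 hcov => ⟨isColimitCoverCoconePlus h𝒰 hcov⟩

end PlusIsCosheaf

section CosheafPlus
variable {X : Type} [TopologicalSpace X] [AlexandrovDiscrete X] {G : Precosheaf X}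

/-- Both sides restrict to `s.ι.app z` on `G(U_z)` for every `z ∈ W`. -/
lemma IsCosheaf.map_comp_ι_app_eq (hG : IsCosheaf G) {U : Opens X}
    (s : Cocone (ptDiagram G (U : Set X))) {W : Opens X} {x y : PtCat (U : Set X)}
    (hx : W ≤ Uo x.1) (hy : W ≤ Uo y.1) :
    G.map (homOfLE hx) ≫ s.ι.app x = G.map (homOfLE hy) ≫ s.ι.app y := by
  refine hG.hom_ext_Uo fun z hz => ?_
  let z' : PtCat (U : Set X) := ⟨z, minOpen_le x.2 (hx hz)⟩
  have restrict (w : PtCat (U : Set X)) (hw : W ≤ Uo w.1) :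
      G.map (homOfLE (Uo_le hz)) ≫ G.map (homOfLE hw) ≫ s.ι.app w = s.ι.app z' :=
    (Category.assoc _ _ _).symm.trans ((congrArg (· ≫ s.ι.app w) (G.map_comp _ _).symm).trans
      (ptDiagram_map_comp_ι_app s (z := z') (x := w) ((Uo_le hz).trans hw)))
  exact (restrict x hx).trans (restrict y hy).symm

noncomputable def nerveCoconeOfPtCocone (hG : IsCosheaf G) {U : Opens X}
    (s : Cocone (ptDiagram G (U : Set X))) : Cocone (nerveDiagram G (minOpenCover U)) where
  pt := s.pt
  ι :=
    { app := fun W =>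
        G.map (homOfLE (exists_le_Uo_of_mem_nerveSet W.2).choose_spec.2) ≫
          s.ι.app ⟨_, (exists_le_Uo_of_mem_nerveSet W.2).choose_spec.1⟩
      naturality := fun W W' f => by
        obtain ⟨hxU, hW'x⟩ := (exists_le_Uo_of_mem_nerveSet W'.2).choose_spec
        simp only [Functor.const_obj_map]
        refine Eq.trans ?_
          (hG.map_comp_ι_app_eq s (x := ⟨_, hxU⟩) ((leOfHom f.hom).trans hW'x) _)
        exact (Category.assoc _ _ _).symm.trans (congrArg (· ≫ _) (G.map_comp _ _).symm) }

lemma IsCosheaf.ι_app_desc_nerveCoconeOfPtCocone (hG : IsCosheaf G) {U : Opens X}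
    (hc : IsColimit (coverCocone G U (minOpenCover U) fun _ => le_of_mem_minOpenCover))
    (s : Cocone (ptDiagram G (U : Set X))) (x : PtCat (U : Set X)) :
    (ptCocone G U).ι.app x ≫ hc.desc (nerveCoconeOfPtCocone hG s) = s.ι.app x := by
  have hx : Uo x.1 ∈ nerveSet (minOpenCover U) :=
    mem_nerveSet_of_mem ⟨x.1, x.2, rfl⟩ (mem_Uo_self x.1)
  refine (hc.fac _ ⟨Uo x.1, hx⟩).trans ?_
  obtain ⟨hyU, hxy⟩ := (exists_le_Uo_of_mem_nerveSet hx).choose_spec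
  refine (hG.map_comp_ι_app_eq s (x := ⟨_, hyU⟩) (y := x) hxy le_rfl).trans ?_
  exact (congrArg (· ≫ s.ι.app x) (G.map_id _)).trans (Category.id_comp _)

noncomputable def IsCosheaf.isColimitPtCocone (hG : IsCosheaf G) (U : Opens X) :
    IsColimit (ptCocone G U) :=
  let hc := (hG U (minOpenCover U) (fun _ => le_of_mem_minOpenCover)
    (le_sSup_minOpenCover U)).some
  { desc := fun s => hc.desc (nerveCoconeOfPtCocone hG s)
    fac := hG.ι_app_desc_nerveCoconeOfPtCocone hc
    uniq := fun s _ hm => hG.hom_ext_Uo fun x hx =>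
      (hm ⟨x, hx⟩).trans (hG.ι_app_desc_nerveCoconeOfPtCocone hc s ⟨x, hx⟩).symm }

lemma IsCosheaf.isIso_plusπ (hG : IsCosheaf G) : IsIso (plusπ G) :=
  have := fun U => isIso_plusπ_app_of_isColimit (hG.isColimitPtCocone U)
  NatIso.isIso_of_isIso_app _

def ptDiagramMap {F : Precosheaf X} (α : G ⟶ F) (U : Set X) :
    ptDiagram G U ⟶ ptDiagram F U where
  app x := α.app (Uo x.1)
  naturality _ _ _ := α.naturality _

noncomputable def plusHom {F : Precosheaf X} (α : G ⟶ F) : plus G ⟶ plus F where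
  app U := colimMap (ptDiagramMap α (U : Set X))
  naturality U V h := colimit.hom_ext fun j => by
    dsimp only [plus]
    erw [← Category.assoc, plusMap_ι, ι_colimMap, ι_colimMap_assoc, plusMap_ι]
    rfl

lemma plusHom_comp_plusπ {F : Precosheaf X} (α : G ⟶ F) :
    plusHom α ≫ plusπ F = plusπ G ≫ α := by
  ext U : 2
  refine colimit.hom_ext fun j => ?_
  dsimp only [plusHom, plusπ, NatTrans.comp_app]
  erw [ι_colimMap_assoc, colimit.ι_desc, colimit.ι_desc_assoc]
  exact (α.naturality _).symm

/-- `π` is an isomorphism on each `U_x`, and a cosheaf is generated by its sections on the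
`U_x`. -/
lemma IsCosheaf.hom_ext_of_comp_plusπ (hG : IsCosheaf G) {F : Precosheaf X}
    {β₁ β₂ : G ⟶ plus F} (h : β₁ ≫ plusπ F = β₂ ≫ plusπ F) : β₁ = β₂ := by
  have hUo (x : X) : β₁.app (Uo x) = β₂.app (Uo x) := by
    have := isIso_plusπ_app_of_isColimit (isColimitPtCoconeUo F x)
    exact (cancel_mono _).mp (congrArg (fun β => β.app (Uo x)) h)
  ext U : 2
  exact hG.hom_ext_Uo fun x hx => by rw [β₁.naturality, β₂.naturality, hUo]

end CosheafPlus

theorem stmt_13_general {X : Type} [TopologicalSpace X] [AlexandrovDiscrete X]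
    (F : Precosheaf X) :
    IsCosheaf (plus F) ∧
      ∀ (G : Precosheaf X), IsCosheaf G → ∀ α : G ⟶ F,
        ∃! α' : G ⟶ plus F, α' ≫ plusπ F = α := by
  refine ⟨isCosheaf_plus F, fun G hG α => ?_⟩
  have := hG.isIso_plusπ
  refine ⟨inv (plusπ G) ≫ plusHom α, ?_, fun β hβ => hG.hom_ext_of_comp_plusπ ?_⟩
  · simp [plusHom_comp_plusπ]
  · simp [hβ, plusHom_comp_plusπ]

/-- Every precosheaf `F` on a `T0` Alexandroff space admits a cosheafification: `F⁺` is a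
cosheaf and `π : F⁺ → F` is universal among homomorphisms from cosheaves to `F`. -/
theorem stmt_13 {X : Type} [TopologicalSpace X] [AlexandrovDiscrete X] [T0Space X]
    (F : Precosheaf X) :
    IsCosheaf (plus F) ∧
      ∀ (G : Precosheaf X), IsCosheaf G → ∀ α : G ⟶ F,
        ∃! α' : G ⟶ plus F, α' ≫ plusπ F = α :=
  stmt_13_general F
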